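/- arXiv:2509.19689 — 2 statements merged into one kernel-verified Lean document; each statement's English description precedes it below -/
import Mathlib

section
/- For all vectors u, v, w, ξ in V, the trace of the composite endomorphism c̃(u)∘c̃(v)∘c̃(w)∘c̃(ξ)∘ε(ξ)∘ι(ξ) of ΛV equals (a₀²b₀²/2)·|ξ|²·[ξ(u)g(v,w) − ξ(v)g(u,w) + ξ(w)g(u,v)]·Tr(Id). -/
open scoped RealInnerProductSpace

noncomputable def eps {V : Type*} [NormedAddCommGroup V] [InnerProductSpace ℝ V]
    (v : V) : Module.End ℝ (ExteriorAlgebra ℝ V) :=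
  LinearMap.mulLeft ℝ (ExteriorAlgebra.ι ℝ v)

noncomputable def iot {V : Type*} [NormedAddCommGroup V] [InnerProductSpace ℝ V]
    (v : V) : Module.End ℝ (ExteriorAlgebra ℝ V) :=
  CliffordAlgebra.contractLeft (innerₛₗ ℝ v)

noncomputable def ctil {V : Type*} [NormedAddCommGroup V] [InnerProductSpace ℝ V]
    (a₀ b₀ : ℝ) (v : V) : Module.End ℝ (ExteriorAlgebra ℝ V) :=
  a₀ • eps v - b₀ • iot v

noncomputable def cbar {V : Type*} [NormedAddCommGroup V] [InnerProductSpace ℝ V]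
    (a₀ b₀ : ℝ) (v : V) : Module.End ℝ (ExteriorAlgebra ℝ V) :=
  b₀ • eps v - a₀ • iot v

noncomputable def cmap {V : Type*} [NormedAddCommGroup V] [InnerProductSpace ℝ V]
    (v : V) : Module.End ℝ (ExteriorAlgebra ℝ V) :=
  eps v - iot v

noncomputable def chat {V : Type*} [NormedAddCommGroup V] [InnerProductSpace ℝ V]
    (v : V) : Module.End ℝ (ExteriorAlgebra ℝ V) :=
  eps v + iot v

section Aux

variable {V : Type*} [NormedAddCommGroup V] [InnerProductSpace ℝ V]

local notation "T" => LinearMap.trace ℝ (ExteriorAlgebra ℝ V)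

lemma eps_mul_eps (a b : V) : eps a * eps b = -(eps b * eps a) := by
  refine LinearMap.ext fun x => ?_
  simp only [Module.End.mul_apply, LinearMap.neg_apply, eps, LinearMap.mulLeft_apply]
  rw [← mul_assoc, ← mul_assoc,
    eq_neg_of_add_eq_zero_left (ExteriorAlgebra.ι_add_mul_swap a b), neg_mul]

lemma eps_sq (a : V) : eps a * eps a = 0 := by
  refine LinearMap.ext fun x => ?_
  simp only [Module.End.mul_apply, LinearMap.zero_apply, eps, LinearMap.mulLeft_apply]
  rw [← mul_assoc, ExteriorAlgebra.ι_sq_zero, zero_mul]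

lemma iot_mul_iot (a b : V) : iot a * iot b = -(iot b * iot a) := by
  refine LinearMap.ext fun x => ?_
  simp only [Module.End.mul_apply, LinearMap.neg_apply, iot]
  exact CliffordAlgebra.contractLeft_comm (Q := (0 : QuadraticForm ℝ V)) (d := innerₛₗ ℝ a) (d' := innerₛₗ ℝ b) x

lemma iot_sq (a : V) : iot a * iot a = 0 := by
  refine LinearMap.ext fun x => ?_
  simp only [Module.End.mul_apply, LinearMap.zero_apply, iot]
  exact CliffordAlgebra.contractLeft_contractLeft (Q := (0 : QuadraticForm ℝ V)) (d := innerₛₗ ℝ a) x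

lemma iot_mul_eps (a b : V) :
    iot a * eps b = (⟪a, b⟫ : ℝ) • (1 : Module.End ℝ (ExteriorAlgebra ℝ V)) - eps b * iot a := by
  refine LinearMap.ext fun x => ?_
  simp only [Module.End.mul_apply, LinearMap.sub_apply, LinearMap.smul_apply,
    Module.End.one_apply, eps, LinearMap.mulLeft_apply, iot]
  have := CliffordAlgebra.contractLeft_ι_mul (Q := (0 : QuadraticForm ℝ V))
    (d := innerₛₗ ℝ a) b x
  simpa [innerₛₗ_apply_apply] using this

lemma iot_mul_eps' (a b : V) (x : Module.End ℝ (ExteriorAlgebra ℝ V)) :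
    iot a * (eps b * x) = (⟪a, b⟫ : ℝ) • x - eps b * (iot a * x) := by
  rw [← mul_assoc, iot_mul_eps, sub_mul, smul_mul_assoc, one_mul, mul_assoc]

lemma eps_mul_eps' (a b : V) (x : Module.End ℝ (ExteriorAlgebra ℝ V)) :
    eps a * (eps b * x) = -(eps b * (eps a * x)) := by
  rw [← mul_assoc, eps_mul_eps, neg_mul (α := Module.End ℝ (ExteriorAlgebra ℝ V)), mul_assoc]

lemma iot_mul_iot' (a b : V) (x : Module.End ℝ (ExteriorAlgebra ℝ V)) :
    iot a * (iot b * x) = -(iot b * (iot a * x)) := by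
  rw [← mul_assoc, iot_mul_iot, neg_mul (α := Module.End ℝ (ExteriorAlgebra ℝ V)), mul_assoc]

lemma tr_ee (a b : V) : T (eps a * eps b) = 0 := by
  have h := LinearMap.trace_mul_comm ℝ (eps a) (eps b)
  rw [eps_mul_eps b a, map_neg] at h
  linarith

lemma tr_ii (a b : V) : T (iot a * iot b) = 0 := by
  have h := LinearMap.trace_mul_comm ℝ (iot a) (iot b)
  rw [iot_mul_iot b a, map_neg] at h
  linarith

lemma tr_ei (a b : V) : T (eps a * iot b) = ⟪b, a⟫ / 2 * T 1 := by
  have h := LinearMap.trace_mul_comm ℝ (iot b) (eps a)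
  rw [iot_mul_eps b a, map_sub, map_smul, smul_eq_mul] at h
  linarith

lemma tr_eeii (a b c d : V) :
    T (eps a * (eps b * (iot c * iot d))) =
      (⟪d, a⟫ * ⟪c, b⟫ - ⟪c, a⟫ * ⟪d, b⟫) / 4 * T 1 := by
  have h := LinearMap.trace_mul_comm ℝ (eps a) (eps b * (iot c * iot d))
  rw [mul_assoc, mul_assoc, iot_mul_eps d a, mul_sub, mul_smul_comm, mul_one,
    iot_mul_eps' c a, mul_sub, mul_sub, mul_smul_comm, mul_smul_comm,
    eps_mul_eps' b a, map_sub, map_sub, map_neg, map_smul, map_smul,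
    smul_eq_mul, smul_eq_mul, tr_ei, tr_ei] at h
  linear_combination h / 2

lemma tr_eiei (a b c d : V) :
    T (eps a * (iot b * (eps c * iot d))) =
      (⟪d, a⟫ * ⟪b, c⟫ + ⟪b, a⟫ * ⟪d, c⟫) / 4 * T 1 := by
  rw [iot_mul_eps' b c, mul_sub, mul_smul_comm, map_sub, map_smul, smul_eq_mul,
    tr_ei, tr_eeii a c b d]
  ring

lemma tr_ieei (a b c d : V) :
    T (iot a * (eps b * (eps c * iot d))) =
      (⟪a, b⟫ * ⟪d, c⟫ - ⟪a, c⟫ * ⟪d, b⟫) / 4 * T 1 := by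
  have h := LinearMap.trace_mul_comm ℝ (iot a) (eps b * (eps c * iot d))
  rw [mul_assoc, mul_assoc] at h
  rw [h, tr_eeii b c d a]
  ring

lemma tr_eeei (a b c d : V) : T (eps a * (eps b * (eps c * iot d))) = 0 := by
  have h := LinearMap.trace_mul_comm ℝ (eps a) (eps b * (eps c * iot d))
  rw [mul_assoc, mul_assoc, iot_mul_eps d a, mul_sub, mul_smul_comm, mul_one,
    eps_mul_eps' c a, mul_sub, mul_smul_comm, mul_neg (α := Module.End ℝ (ExteriorAlgebra ℝ V)), eps_mul_eps' b a, neg_neg,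
    map_sub, map_smul, smul_eq_mul, tr_ee] at h
  linarith

lemma tr_eiii (a b c d : V) : T (eps a * (iot b * (iot c * iot d))) = 0 := by
  have h := LinearMap.trace_mul_comm ℝ (eps a) (iot b * (iot c * iot d))
  rw [mul_assoc, mul_assoc, iot_mul_eps d a, mul_sub, mul_smul_comm, mul_one,
    iot_mul_eps' c a, mul_sub, mul_sub, mul_smul_comm, mul_smul_comm,
    iot_mul_eps' b a, map_sub, map_sub, map_sub, map_smul, map_smul, map_smul,
    smul_eq_mul, smul_eq_mul, smul_eq_mul, tr_ii, tr_ii, tr_ii] at h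
  linarith

lemma tr_ieii (a b c d : V) : T (iot a * (eps b * (iot c * iot d))) = 0 := by
  have h := LinearMap.trace_mul_comm ℝ (iot a) (eps b * (iot c * iot d))
  rw [mul_assoc, mul_assoc] at h
  rw [h, tr_eiii b c d a]

lemma tr_iiei (a b c d : V) : T (iot a * (iot b * (eps c * iot d))) = 0 := by
  have h := LinearMap.trace_mul_comm ℝ (iot a) (iot b * (eps c * iot d))
  rw [mul_assoc, mul_assoc] at h
  rw [h, tr_ieii b c d a]

lemma tr_iiii (a b c d : V) : T (iot a * (iot b * (iot c * iot d))) = 0 := by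
  have h := LinearMap.trace_mul_comm ℝ (iot a) (iot b * (iot c * iot d))
  rw [mul_assoc, mul_assoc, iot_mul_iot d a] at h
  simp only [mul_neg (α := Module.End ℝ (ExteriorAlgebra ℝ V)), iot_mul_iot' c a, iot_mul_iot' b a, neg_neg, map_neg] at h
  linarith

lemma ctil_eps_iot (a₀ b₀ : ℝ) (ξ : V) :
    ctil a₀ b₀ ξ * (eps ξ * iot ξ) = (-(b₀ * ⟪ξ, ξ⟫)) • iot ξ := by
  rw [ctil, sub_mul, smul_mul_assoc, smul_mul_assoc, ← mul_assoc (eps ξ), eps_sq,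
    zero_mul, smul_zero, ← mul_assoc (iot ξ), iot_mul_eps, sub_mul, smul_mul_assoc,
    one_mul, mul_assoc, iot_sq, mul_zero, sub_zero, zero_sub, smul_smul, neg_smul (M := Module.End ℝ (ExteriorAlgebra ℝ V)),
    ← neg_smul (M := Module.End ℝ (ExteriorAlgebra ℝ V))]

end Aux

theorem statement_12 {V : Type*} [NormedAddCommGroup V] [InnerProductSpace ℝ V]
    [FiniteDimensional ℝ V] (a₀ b₀ : ℝ) (u v w ξ : V) :
    LinearMap.trace ℝ (ExteriorAlgebra ℝ V) (ctil a₀ b₀ u * ctil a₀ b₀ v * ctil a₀ b₀ w * ctil a₀ b₀ ξ * eps ξ * iot ξ) =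
      a₀ ^ 2 * b₀ ^ 2 / 2 * ⟪ξ, ξ⟫ * (⟪ξ, u⟫ * ⟪v, w⟫ - ⟪ξ, v⟫ * ⟪u, w⟫ + ⟪ξ, w⟫ * ⟪u, v⟫) * LinearMap.trace ℝ (ExteriorAlgebra ℝ V) 1 := by
  simp only [mul_assoc]
  rw [ctil_eps_iot]
  simp only [ctil, sub_mul, smul_mul_assoc, mul_sub, mul_smul_comm, map_sub, map_smul,
    smul_eq_mul]
  rw [tr_eeei u v w ξ, tr_eeii u v w ξ, tr_eiei u v w ξ, tr_eiii u v w ξ,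
    tr_ieei u v w ξ, tr_ieii u v w ξ, tr_iiei u v w ξ, tr_iiii u v w ξ]
  rw [real_inner_comm w v, real_inner_comm w u, real_inner_comm v u]
  ring
end

section
/- For all vectors u, v, w, ξ, X in V, the trace of the composite endomorphism c̃(u)∘c̃(v)∘c̃(w)∘c̃(ξ)∘ε(ξ)∘ι(ξ)∘(c̄(ξ)∘c(X) + c(X)∘c̃(ξ)) of ΛV equals −(a₀b₀²(a₀²+4a₀b₀−b₀²)/4)·|ξ|²·ξ(X)·A·Tr(Id) + (a₀b₀²(a₀²−b₀²)/4)·|ξ|⁴·B·Tr(Id), where A = ξ(u)g(v,w) − ξ(v)g(u,w) + ξ(w)g(u,v) and B = g(X,u)g(v,w) − g(X,v)g(u,w) + g(X,w)g(u,v). -/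
open scoped RealInnerProductSpace

section base
variable {V : Type*} [NormedAddCommGroup V] [InnerProductSpace ℝ V]

lemma eps_anti (x y : V) : eps x * eps y + eps y * eps x = 0 := by
  apply LinearMap.ext; intro z
  simp only [eps, Module.End.mul_apply, LinearMap.add_apply, LinearMap.mulLeft_apply,
    LinearMap.zero_apply]
  rw [← mul_assoc, ← mul_assoc, ← add_mul, ExteriorAlgebra.ι_add_mul_swap, zero_mul]

lemma iot_anti (x y : V) : iot x * iot y + iot y * iot x = 0 := by
  apply LinearMap.ext; intro z
  simp only [iot, Module.End.mul_apply, LinearMap.add_apply, LinearMap.zero_apply]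
  rw [CliffordAlgebra.contractLeft_comm]
  exact neg_add_cancel _

lemma iot_eps_anti (x y : V) : iot x * eps y + eps y * iot x = (⟪x, y⟫ : ℝ) • 1 := by
  apply LinearMap.ext; intro z
  simp only [iot, eps, Module.End.mul_apply, LinearMap.add_apply, LinearMap.mulLeft_apply,
    LinearMap.smul_apply, Module.End.one_apply]
  rw [CliffordAlgebra.contractLeft_ι_mul]
  simp [innerₛₗ_apply_apply, sub_add_cancel]

end base

section trlem
variable {M : Type*} [AddCommGroup M] [Module ℝ M]

local notation "Tr" => LinearMap.trace ℝ M

lemma move_pair (a b : Module.End ℝ M) (c : ℝ) (h : a*b + b*a = c • 1)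
    (p : Module.End ℝ M) : a*(b*p) = c • p - b*(a*p) := by
  have e : a*b = c • 1 - b*a := eq_sub_of_add_eq h
  calc a*(b*p) = (a*b)*p := by rw [mul_assoc]
    _ = (c • 1 - b*a)*p := by rw [e]
    _ = c • p - b*(a*p) := by rw [sub_mul, smul_mul_assoc, one_mul, mul_assoc]

lemma tr_two (a b : Module.End ℝ M) (c : ℝ) (h : a*b + b*a = c • 1) :
    Tr (a*b) = c/2 * Tr 1 := by
  have h1 : Tr (a*b) + Tr (b*a) = c * Tr 1 := by
    rw [← map_add, h, map_smul, smul_eq_mul]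
  rw [LinearMap.trace_mul_comm ℝ b a] at h1
  linarith

lemma tr_four (x1 x2 x3 x4 : Module.End ℝ M) (c12 c13 c14 : ℝ)
    (h12 : x1*x2 + x2*x1 = c12 • 1) (h13 : x1*x3 + x3*x1 = c13 • 1)
    (h14 : x1*x4 + x4*x1 = c14 • 1) :
    Tr (x1*(x2*(x3*x4))) =
      (c12 * Tr (x3*x4) - c13 * Tr (x2*x4) + c14 * Tr (x2*x3)) / 2 := by
  have e14 : x1*x4 = c14 • 1 - x4*x1 := eq_sub_of_add_eq h14
  have key : x1*(x2*(x3*x4)) =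
      c12 • (x3*x4) - c13 • (x2*x4) + c14 • (x2*x3) - x2*(x3*(x4*x1)) := by
    rw [move_pair x1 x2 c12 h12, move_pair x1 x3 c13 h13, e14]
    simp only [mul_sub, mul_smul_comm, mul_one]
    module
  have tkey := congrArg Tr key
  simp only [map_sub, map_add, map_smul, smul_eq_mul] at tkey
  have assoc : x2*(x3*(x4*x1)) = (x2*(x3*x4))*x1 := by
    simp only [mul_assoc]
  rw [assoc, LinearMap.trace_mul_comm ℝ (x2*(x3*x4)) x1] at tkey
  linarith

lemma tr_six (x1 x2 x3 x4 x5 x6 : Module.End ℝ M) (c12 c13 c14 c15 c16 : ℝ)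
    (h12 : x1*x2 + x2*x1 = c12 • 1) (h13 : x1*x3 + x3*x1 = c13 • 1)
    (h14 : x1*x4 + x4*x1 = c14 • 1) (h15 : x1*x5 + x5*x1 = c15 • 1)
    (h16 : x1*x6 + x6*x1 = c16 • 1) :
    Tr (x1*(x2*(x3*(x4*(x5*x6))))) =
      (c12 * Tr (x3*(x4*(x5*x6))) - c13 * Tr (x2*(x4*(x5*x6)))
        + c14 * Tr (x2*(x3*(x5*x6))) - c15 * Tr (x2*(x3*(x4*x6)))
        + c16 * Tr (x2*(x3*(x4*x5)))) / 2 := by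
  have e16 : x1*x6 = c16 • 1 - x6*x1 := eq_sub_of_add_eq h16
  have key : x1*(x2*(x3*(x4*(x5*x6)))) =
      c12 • (x3*(x4*(x5*x6))) - c13 • (x2*(x4*(x5*x6)))
        + c14 • (x2*(x3*(x5*x6))) - c15 • (x2*(x3*(x4*x6)))
        + c16 • (x2*(x3*(x4*x5))) - x2*(x3*(x4*(x5*(x6*x1)))) := by
    rw [move_pair x1 x2 c12 h12, move_pair x1 x3 c13 h13, move_pair x1 x4 c14 h14,
      move_pair x1 x5 c15 h15, e16]
    simp only [mul_sub, mul_smul_comm, mul_one]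
    module
  have tkey := congrArg Tr key
  simp only [map_sub, map_add, map_smul, smul_eq_mul] at tkey
  have assoc : x2*(x3*(x4*(x5*(x6*x1)))) = (x2*(x3*(x4*(x5*x6))))*x1 := by
    simp only [mul_assoc]
  rw [assoc, LinearMap.trace_mul_comm ℝ (x2*(x3*(x4*(x5*x6)))) x1] at tkey
  linarith

lemma tr_eight (x1 x2 x3 x4 x5 x6 x7 x8 : Module.End ℝ M)
    (c12 c13 c14 c15 c16 c17 c18 : ℝ)
    (h12 : x1*x2 + x2*x1 = c12 • 1) (h13 : x1*x3 + x3*x1 = c13 • 1)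
    (h14 : x1*x4 + x4*x1 = c14 • 1) (h15 : x1*x5 + x5*x1 = c15 • 1)
    (h16 : x1*x6 + x6*x1 = c16 • 1) (h17 : x1*x7 + x7*x1 = c17 • 1)
    (h18 : x1*x8 + x8*x1 = c18 • 1) :
    Tr (x1*(x2*(x3*(x4*(x5*(x6*(x7*x8))))))) =
      (c12 * Tr (x3*(x4*(x5*(x6*(x7*x8))))) - c13 * Tr (x2*(x4*(x5*(x6*(x7*x8)))))
        + c14 * Tr (x2*(x3*(x5*(x6*(x7*x8))))) - c15 * Tr (x2*(x3*(x4*(x6*(x7*x8)))))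
        + c16 * Tr (x2*(x3*(x4*(x5*(x7*x8))))) - c17 * Tr (x2*(x3*(x4*(x5*(x6*x8)))))
        + c18 * Tr (x2*(x3*(x4*(x5*(x6*x7)))))) / 2 := by
  have e18 : x1*x8 = c18 • 1 - x8*x1 := eq_sub_of_add_eq h18
  have key : x1*(x2*(x3*(x4*(x5*(x6*(x7*x8)))))) =
      c12 • (x3*(x4*(x5*(x6*(x7*x8))))) - c13 • (x2*(x4*(x5*(x6*(x7*x8)))))
        + c14 • (x2*(x3*(x5*(x6*(x7*x8))))) - c15 • (x2*(x3*(x4*(x6*(x7*x8)))))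
        + c16 • (x2*(x3*(x4*(x5*(x7*x8))))) - c17 • (x2*(x3*(x4*(x5*(x6*x8)))))
        + c18 • (x2*(x3*(x4*(x5*(x6*x7))))) - x2*(x3*(x4*(x5*(x6*(x7*(x8*x1)))))) := by
    rw [move_pair x1 x2 c12 h12, move_pair x1 x3 c13 h13, move_pair x1 x4 c14 h14,
      move_pair x1 x5 c15 h15, move_pair x1 x6 c16 h16, move_pair x1 x7 c17 h17, e18]
    simp only [mul_sub, mul_smul_comm, mul_one]
    module
  have tkey := congrArg Tr key
  simp only [map_sub, map_add, map_smul, smul_eq_mul] at tkey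
  have assoc : x2*(x3*(x4*(x5*(x6*(x7*(x8*x1)))))) = (x2*(x3*(x4*(x5*(x6*(x7*x8))))))*x1 := by
    simp only [mul_assoc]
  rw [assoc, LinearMap.trace_mul_comm ℝ (x2*(x3*(x4*(x5*(x6*(x7*x8)))))) x1] at tkey
  linarith

end trlem

section genlem
variable {V : Type*} [NormedAddCommGroup V] [InnerProductSpace ℝ V]

noncomputable def gen (α β : ℝ) (x : V) : Module.End ℝ (ExteriorAlgebra ℝ V) :=
  α • eps x + β • iot x

lemma gen_anticomm (α β γ δ : ℝ) (x y : V) :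
    gen α β x * gen γ δ y + gen γ δ y * gen α β x = ((α*δ + β*γ) * ⟪x, y⟫) • 1 := by
  have h1 := eps_anti x y
  have h2 := iot_anti x y
  have h3 := iot_eps_anti x y
  have h4 := iot_eps_anti y x
  have expand : gen α β x * gen γ δ y + gen γ δ y * gen α β x
      = (α*γ) • (eps x * eps y + eps y * eps x) + (β*δ) • (iot x * iot y + iot y * iot x)
        + (β*γ) • (iot x * eps y + eps y * iot x) + (α*δ) • (iot y * eps x + eps x * iot y) := by
    simp only [gen, add_mul, mul_add, smul_mul_assoc, mul_smul_comm]
    module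
  rw [expand, h1, h2, h3, h4, real_inner_comm y x]
  simp only [smul_zero, smul_smul, zero_add]
  module

local notation "TrE" => LinearMap.trace ℝ (ExteriorAlgebra ℝ V)

lemma gtr2 (p1 q1 p2 q2 : ℝ) (y1 y2 : V) :
    TrE (gen p1 q1 y1 * gen p2 q2 y2) = (p1*q2 + q1*p2) * ⟪y1, y2⟫ / 2 * TrE 1 :=
  tr_two _ _ _ (gen_anticomm p1 q1 p2 q2 y1 y2)

lemma gtr4 (p1 q1 p2 q2 p3 q3 p4 q4 : ℝ) (y1 y2 y3 y4 : V) :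
    TrE (gen p1 q1 y1 * (gen p2 q2 y2 * (gen p3 q3 y3 * gen p4 q4 y4))) =
      ((p1*q2 + q1*p2) * ⟪y1, y2⟫ * TrE (gen p3 q3 y3 * gen p4 q4 y4)
        - (p1*q3 + q1*p3) * ⟪y1, y3⟫ * TrE (gen p2 q2 y2 * gen p4 q4 y4)
        + (p1*q4 + q1*p4) * ⟪y1, y4⟫ * TrE (gen p2 q2 y2 * gen p3 q3 y3)) / 2 :=
  tr_four _ _ _ _ _ _ _ (gen_anticomm _ _ _ _ _ _) (gen_anticomm _ _ _ _ _ _)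
    (gen_anticomm _ _ _ _ _ _)

lemma gtr6 (p1 q1 p2 q2 p3 q3 p4 q4 p5 q5 p6 q6 : ℝ) (y1 y2 y3 y4 y5 y6 : V) :
    TrE (gen p1 q1 y1 * (gen p2 q2 y2 * (gen p3 q3 y3 * (gen p4 q4 y4 *
        (gen p5 q5 y5 * gen p6 q6 y6))))) =
      ((p1*q2 + q1*p2) * ⟪y1, y2⟫ *
          TrE (gen p3 q3 y3 * (gen p4 q4 y4 * (gen p5 q5 y5 * gen p6 q6 y6)))
        - (p1*q3 + q1*p3) * ⟪y1, y3⟫ *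
          TrE (gen p2 q2 y2 * (gen p4 q4 y4 * (gen p5 q5 y5 * gen p6 q6 y6)))
        + (p1*q4 + q1*p4) * ⟪y1, y4⟫ *
          TrE (gen p2 q2 y2 * (gen p3 q3 y3 * (gen p5 q5 y5 * gen p6 q6 y6)))
        - (p1*q5 + q1*p5) * ⟪y1, y5⟫ *
          TrE (gen p2 q2 y2 * (gen p3 q3 y3 * (gen p4 q4 y4 * gen p6 q6 y6)))
        + (p1*q6 + q1*p6) * ⟪y1, y6⟫ *
          TrE (gen p2 q2 y2 * (gen p3 q3 y3 * (gen p4 q4 y4 * gen p5 q5 y5)))) / 2 :=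
  tr_six _ _ _ _ _ _ _ _ _ _ _ (gen_anticomm _ _ _ _ _ _) (gen_anticomm _ _ _ _ _ _)
    (gen_anticomm _ _ _ _ _ _) (gen_anticomm _ _ _ _ _ _) (gen_anticomm _ _ _ _ _ _)

lemma gtr8 (p1 q1 p2 q2 p3 q3 p4 q4 p5 q5 p6 q6 p7 q7 p8 q8 : ℝ)
    (y1 y2 y3 y4 y5 y6 y7 y8 : V) :
    TrE (gen p1 q1 y1 * (gen p2 q2 y2 * (gen p3 q3 y3 * (gen p4 q4 y4 *
        (gen p5 q5 y5 * (gen p6 q6 y6 * (gen p7 q7 y7 * gen p8 q8 y8))))))) =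
      ((p1*q2 + q1*p2) * ⟪y1, y2⟫ *
          TrE (gen p3 q3 y3 * (gen p4 q4 y4 * (gen p5 q5 y5 * (gen p6 q6 y6 *
            (gen p7 q7 y7 * gen p8 q8 y8)))))
        - (p1*q3 + q1*p3) * ⟪y1, y3⟫ *
          TrE (gen p2 q2 y2 * (gen p4 q4 y4 * (gen p5 q5 y5 * (gen p6 q6 y6 *
            (gen p7 q7 y7 * gen p8 q8 y8)))))
        + (p1*q4 + q1*p4) * ⟪y1, y4⟫ *
          TrE (gen p2 q2 y2 * (gen p3 q3 y3 * (gen p5 q5 y5 * (gen p6 q6 y6 *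
            (gen p7 q7 y7 * gen p8 q8 y8)))))
        - (p1*q5 + q1*p5) * ⟪y1, y5⟫ *
          TrE (gen p2 q2 y2 * (gen p3 q3 y3 * (gen p4 q4 y4 * (gen p6 q6 y6 *
            (gen p7 q7 y7 * gen p8 q8 y8)))))
        + (p1*q6 + q1*p6) * ⟪y1, y6⟫ *
          TrE (gen p2 q2 y2 * (gen p3 q3 y3 * (gen p4 q4 y4 * (gen p5 q5 y5 *
            (gen p7 q7 y7 * gen p8 q8 y8)))))
        - (p1*q7 + q1*p7) * ⟪y1, y7⟫ *
          TrE (gen p2 q2 y2 * (gen p3 q3 y3 * (gen p4 q4 y4 * (gen p5 q5 y5 *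
            (gen p6 q6 y6 * gen p8 q8 y8)))))
        + (p1*q8 + q1*p8) * ⟪y1, y8⟫ *
          TrE (gen p2 q2 y2 * (gen p3 q3 y3 * (gen p4 q4 y4 * (gen p5 q5 y5 *
            (gen p6 q6 y6 * gen p7 q7 y7)))))) / 2 :=
  tr_eight _ _ _ _ _ _ _ _ _ _ _ _ _ _ _ (gen_anticomm _ _ _ _ _ _) (gen_anticomm _ _ _ _ _ _)
    (gen_anticomm _ _ _ _ _ _) (gen_anticomm _ _ _ _ _ _) (gen_anticomm _ _ _ _ _ _)
    (gen_anticomm _ _ _ _ _ _) (gen_anticomm _ _ _ _ _ _)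

end genlem

section conv
variable {V : Type*} [NormedAddCommGroup V] [InnerProductSpace ℝ V]

lemma ctil_gen (a b : ℝ) (v : V) : ctil a b v = gen a (-b) v := by
  simp [ctil, gen, sub_eq_add_neg, neg_smul]
  exact (neg_smul _ _).symm

lemma cbar_gen (a b : ℝ) (v : V) : cbar a b v = gen b (-a) v := by
  simp [cbar, gen, sub_eq_add_neg, neg_smul]
  exact (neg_smul _ _).symm

lemma cmap_gen (v : V) : cmap v = gen 1 (-1) v := by
  simp [cmap, gen, sub_eq_add_neg, neg_smul]
  exact (neg_one_smul ℝ _).symm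

lemma eps_gen (v : V) : eps v = gen 1 0 v := by simp [gen]

lemma iot_gen (v : V) : iot v = gen 0 1 v := by simp [gen]

end conv

theorem statement_15 {V : Type*} [NormedAddCommGroup V] [InnerProductSpace ℝ V]
    [FiniteDimensional ℝ V] (a₀ b₀ : ℝ) (u v w ξ X : V) :
    LinearMap.trace ℝ (ExteriorAlgebra ℝ V) (ctil a₀ b₀ u * ctil a₀ b₀ v * ctil a₀ b₀ w * ctil a₀ b₀ ξ * (eps ξ * iot ξ) * (cbar a₀ b₀ ξ * cmap X + cmap X * ctil a₀ b₀ ξ)) =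
      -(a₀ * b₀ ^ 2 * (a₀ ^ 2 + 4 * a₀ * b₀ - b₀ ^ 2) / 4) * ⟪ξ, ξ⟫ * ⟪ξ, X⟫ * (⟪ξ, u⟫ * ⟪v, w⟫ - ⟪ξ, v⟫ * ⟪u, w⟫ + ⟪ξ, w⟫ * ⟪u, v⟫) * LinearMap.trace ℝ (ExteriorAlgebra ℝ V) 1 +
        a₀ * b₀ ^ 2 * (a₀ ^ 2 - b₀ ^ 2) / 4 * ⟪ξ, ξ⟫ ^ 2 * (⟪X, u⟫ * ⟪v, w⟫ - ⟪X, v⟫ * ⟪u, w⟫ + ⟪X, w⟫ * ⟪u, v⟫) * LinearMap.trace ℝ (ExteriorAlgebra ℝ V) 1 := by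
  simp only [ctil_gen, cbar_gen, cmap_gen, eps_gen, iot_gen]
  simp only [mul_add, mul_assoc, map_add]
  rw [gtr8, gtr8]
  simp only [gtr6, gtr4, gtr2]
  simp only [real_inner_comm ξ u, real_inner_comm ξ v, real_inner_comm ξ w,
    real_inner_comm X u, real_inner_comm X v, real_inner_comm X w, real_inner_comm X ξ]
  ring
end
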